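/- In a reverse differential restriction category with countable joins of disjoint maps, the forward derivative of a while-loop interpretation satisfies: D[⋁_{n≥0} (b_T f)ⁿ b_F] = (⋁_{n≥0} ((b_T × 1) T(f))ⁿ (b_F × 1)) π₁, where b_T, b_F are disjoint restriction idempotents on A, f : A → A, and T(f) = ⟨π₀ f, D[f]⟩. -/
import Mathlib


open CategoryTheory

universe v u

/-- A restriction category: a category with a restriction operator `rst`
satisfying the four Cockett–Lack axioms R1–R4. -/
class RestrictionCat (C : Type u) [Category.{v} C] where
  rst : ∀ {A B : C}, (A ⟶ B) → (A ⟶ A)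
  rst_comp : ∀ {A B : C} (f : A ⟶ B), rst f ≫ f = f
  rst_comm : ∀ {A B B' : C} (f : A ⟶ B) (g : A ⟶ B'), rst f ≫ rst g = rst g ≫ rst f
  rst_rst : ∀ {A B B' : C} (f : A ⟶ B) (g : A ⟶ B'), rst (rst g ≫ f) = rst g ≫ rst f
  rst_slide : ∀ {A B D : C} (f : A ⟶ B) (g : B ⟶ D), f ≫ rst g = rst (f ≫ g) ≫ f

open RestrictionCat

/-- The canonical partial order on hom-sets: `f ≤ g` iff `rst f ≫ g = f`. -/
def rle {C : Type u} [Category.{v} C] [RestrictionCat C] {A B : C} (f g : A ⟶ B) : Prop :=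
  rst f ≫ g = f

/-- A Cartesian left additive restriction category: a restriction category with
(lax) restriction products and a left additive structure on hom-sets. -/
class CLARC (C : Type u) [Category.{v} C] extends RestrictionCat C where
  prod : C → C → C
  pair : ∀ {A B B' : C}, (A ⟶ B) → (A ⟶ B') → (A ⟶ prod B B')
  p0 : ∀ {B B' : C}, prod B B' ⟶ B
  p1 : ∀ {B B' : C}, prod B B' ⟶ B'
  pair_p0 : ∀ {A B B' : C} (f : A ⟶ B) (g : A ⟶ B'), pair f g ≫ p0 = rst g ≫ f
  pair_p1 : ∀ {A B B' : C} (f : A ⟶ B) (g : A ⟶ B'), pair f g ≫ p1 = rst f ≫ g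
  pair_eta : ∀ {A B B' : C} (h : A ⟶ prod B B'), pair (h ≫ p0) (h ≫ p1) = h
  comp_pair : ∀ {X A B B' : C} (x : X ⟶ A) (f : A ⟶ B) (g : A ⟶ B'),
    x ≫ pair f g = pair (x ≫ f) (x ≫ g)
  add : ∀ {A B : C}, (A ⟶ B) → (A ⟶ B) → (A ⟶ B)
  zero : ∀ {A B : C}, A ⟶ B
  add_assoc : ∀ {A B : C} (f g h : A ⟶ B), add (add f g) h = add f (add g h)
  add_comm : ∀ {A B : C} (f g : A ⟶ B), add f g = add g f
  add_zero : ∀ {A B : C} (f : A ⟶ B), add f zero = f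
  comp_add : ∀ {X A B : C} (x : X ⟶ A) (f g : A ⟶ B),
    x ≫ add f g = add (x ≫ f) (x ≫ g)
  zero_comp_le : ∀ {A B D : C} (f : B ⟶ D),
    rst ((zero : A ⟶ B) ≫ f) ≫ (zero : A ⟶ D) = (zero : A ⟶ B) ≫ f
  zero_total : ∀ {A B : C}, rst (zero : A ⟶ B) = 𝟙 A
  add_p0 : ∀ {A B B' : C} (f g : A ⟶ prod B B'),
    add f g ≫ p0 = add (f ≫ p0) (g ≫ p0)
  add_p1 : ∀ {A B B' : C} (f g : A ⟶ prod B B'),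
    add f g ≫ p1 = add (f ≫ p1) (g ≫ p1)
  zero_p0 : ∀ {A B B' : C}, (zero : A ⟶ prod B B') ≫ p0 = (zero : A ⟶ B)
  zero_p1 : ∀ {A B B' : C}, (zero : A ⟶ prod B B') ≫ p1 = (zero : A ⟶ B')

open CLARC

/-- A reverse differential restriction category: a Cartesian left additive
restriction category equipped with a reverse differential operator `Rd`
satisfying axioms RD.1–RD.9. -/
class RDRC (C : Type u) [Category.{v} C] extends CLARC C where
  Rd : ∀ {A B : C}, (A ⟶ B) → (prod A B ⟶ A)
  RD1a : ∀ {A B : C} (f g : A ⟶ B), Rd (add f g) = add (Rd f) (Rd g)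
  RD1b : ∀ {A B : C}, Rd (zero : A ⟶ B) = zero
  RD2a : ∀ {X A B : C} (a : X ⟶ A) (b c : X ⟶ B) (f : A ⟶ B),
    pair a (add b c) ≫ Rd f = add (pair a b ≫ Rd f) (pair a c ≫ Rd f)
  RD2b : ∀ {X A B : C} (a : X ⟶ A) (f : A ⟶ B),
    pair a (zero : X ⟶ B) ≫ Rd f = rst (a ≫ f) ≫ zero
  RD3a : ∀ {A B : C}, Rd (p0 : prod A B ⟶ A) = p1 ≫ pair (𝟙 A) (zero : A ⟶ B)
  RD3b : ∀ {A B : C}, Rd (p1 : prod A B ⟶ B) = p1 ≫ pair (zero : B ⟶ A) (𝟙 B)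
  RD4 : ∀ {A B B' : C} (f : A ⟶ B) (g : A ⟶ B'),
    Rd (pair f g) = add (pair p0 (p1 ≫ p0) ≫ Rd f) (pair p0 (p1 ≫ p1) ≫ Rd g)
  RD5 : ∀ {A B D : C} (f : A ⟶ B) (g : B ⟶ D),
    Rd (f ≫ g) = pair p0 (pair (p0 ≫ f) p1 ≫ Rd g) ≫ Rd f
  RD6 : ∀ {A B : C} (f : A ⟶ B),
    pair (pair p0 (p1 ≫ p0)) (pair (p0 ≫ (zero : A ⟶ A)) (p1 ≫ p1)) ≫
      pair (p0 ≫ pair (p0 ≫ pair (𝟙 A) (zero : A ⟶ B)) p1) p1 ≫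
      Rd (Rd (Rd f)) ≫ p1
    = pair p0 (p1 ≫ p1) ≫ Rd f
  RD7 : ∀ {A B : C} (f : A ⟶ B),
    pair (pair p0 (zero : prod (prod A A) (prod A A) ⟶ B)) p1 ≫
      Rd (Rd (pair (pair p0 (zero : prod A A ⟶ B)) p1 ≫ Rd (Rd f) ≫ p1)) ≫ p1
    = pair (pair (p0 ≫ p0) (p1 ≫ p0)) (pair (p0 ≫ p1) (p1 ≫ p1)) ≫
      pair (pair p0 (zero : prod (prod A A) (prod A A) ⟶ B)) p1 ≫
      Rd (Rd (pair (pair p0 (zero : prod A A ⟶ B)) p1 ≫ Rd (Rd f) ≫ p1)) ≫ p1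
  RD8 : ∀ {A B : C} (f : A ⟶ B), rst (Rd f) = pair (p0 ≫ rst f) p1
  RD9 : ∀ {A B : C} (f : A ⟶ B), Rd (rst f) = pair (p0 ≫ rst f) p1 ≫ p1

open RDRC

/-- Pairwise compatibility of a family of parallel maps. -/
def Compat {C : Type u} [Category.{v} C] [RestrictionCat C] {A B : C}
    (S : Set (A ⟶ B)) : Prop :=
  ∀ f ∈ S, ∀ g ∈ S, rst f ≫ g = rst g ≫ f

/-- A reverse differential join restriction category: an RDRC in which every
pairwise compatible family of parallel maps has a join, compatible with
composition. -/
class JoinRDRC (C : Type u) [Category.{v} C] extends RDRC C where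
  join : ∀ {A B : C}, Set (A ⟶ B) → (A ⟶ B)
  join_le : ∀ {A B : C} (S : Set (A ⟶ B)),
    (∀ f ∈ S, ∀ g ∈ S, rst f ≫ g = rst g ≫ f) →
    ∀ f ∈ S, rst f ≫ join S = f
  join_min : ∀ {A B : C} (S : Set (A ⟶ B)) (g : A ⟶ B),
    (∀ f ∈ S, ∀ g ∈ S, rst f ≫ g = rst g ≫ f) →
    (∀ f ∈ S, rst f ≫ g = f) → rst (join S) ≫ g = join S
  comp_join : ∀ {X A B : C} (x : X ⟶ A) (S : Set (A ⟶ B)),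
    (∀ f ∈ S, ∀ g ∈ S, rst f ≫ g = rst g ≫ f) →
    x ≫ join S = join ((x ≫ ·) '' S)
  join_comp : ∀ {A B Y : C} (S : Set (A ⟶ B)) (y : B ⟶ Y),
    (∀ f ∈ S, ∀ g ∈ S, rst f ≫ g = rst g ≫ f) →
    join S ≫ y = join ((· ≫ y) '' S)

open JoinRDRC

variable {C : Type u} [Category.{v} C]

/-- The forward derivative derived from the reverse derivative:
`D[f] := ⟨⟨π₀, 0⟩, π₁⟩ ≫ R[R[f]] ≫ π₁`. -/
def Dop [JoinRDRC C] {A B : C} (f : A ⟶ B) : prod A A ⟶ B :=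
  pair (pair p0 (zero : prod A A ⟶ B)) p1 ≫ Rd (Rd f) ≫ p1

/-- The tangent construction `T(f) := ⟨π₀ ≫ f, D[f]⟩`. -/
def Tang [JoinRDRC C] {A B : C} (f : A ⟶ B) : prod A A ⟶ prod B B :=
  pair (p0 ≫ f) (Dop f)

/-- `n`-fold composition of an endomap. -/
def pow [JoinRDRC C] {A : C} (f : A ⟶ A) : ℕ → (A ⟶ A)
  | 0 => 𝟙 A
  | n + 1 => f ≫ pow f n


section Toolkit

variable [JoinRDRC C]

/-! ### Basic restriction lemmas -/

lemma rst_one (A : C) : rst (𝟙 A) = 𝟙 A := by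
  have h := rst_comp (𝟙 A); simpa using h

lemma rst_rst_self {A B : C} (f : A ⟶ B) : rst (rst f) = rst f := by
  have h := rst_rst (𝟙 A) f
  simpa [rst_one] using h

lemma rst_idem {A B : C} (f : A ⟶ B) : rst f ≫ rst f = rst f := by
  have h := rst_rst f f
  rw [rst_comp] at h
  exact h.symm

lemma rst_comp_pre {A B D : C} (f : A ⟶ B) (g : B ⟶ D) :
    rst f ≫ rst (f ≫ g) = rst (f ≫ g) := by
  have h1 : f ≫ g = rst f ≫ (f ≫ g) := by rw [← Category.assoc, rst_comp]
  calc rst f ≫ rst (f ≫ g) = rst (rst f ≫ (f ≫ g)) := (rst_rst _ _).symm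
    _ = rst (f ≫ g) := by rw [← h1]

lemma rst_comp_post {A B D : C} (f : A ⟶ B) (g : B ⟶ D) :
    rst (f ≫ g) ≫ rst f = rst (f ≫ g) := by
  rw [rst_comm]; exact rst_comp_pre f g

lemma rst_comp_rst {A B D : C} (f : A ⟶ B) (g : B ⟶ D) :
    rst (f ≫ rst g) = rst (f ≫ g) := by
  rw [rst_slide f g, rst_rst]
  exact rst_comp_post f g

lemma rst_comp_total {A B D : C} (f : A ⟶ B) (g : B ⟶ D) (hg : rst g = 𝟙 B) :
    rst (f ≫ g) = rst f := by
  rw [← rst_comp_rst, hg, Category.comp_id]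

/-- slide for a restriction idempotent, convenient orientation. -/
lemma idem_slide {A B : C} (f : A ⟶ B) (e : B ⟶ B) (he : rst e = e) :
    f ≫ e = rst (f ≫ e) ≫ f := by
  conv_lhs => rw [← he, rst_slide]

/-! ### Product lemmas -/

lemma pair_ext {X B B' : C} {h k : X ⟶ prod B B'}
    (h0 : h ≫ p0 = k ≫ p0) (h1 : h ≫ p1 = k ≫ p1) : h = k := by
  rw [← pair_eta h, h0, h1, pair_eta]

lemma id_eq_pair (B B' : C) : 𝟙 (prod B B') = pair p0 p1 := by
  simpa using (pair_eta (𝟙 (prod B B'))).symm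

lemma rst_absorb_pair_left {X B B' : C} (f : X ⟶ B) (g : X ⟶ B') :
    rst f ≫ pair f g = pair f g := by
  apply pair_ext
  · have : rst f ≫ pair f g ≫ p0 = pair f g ≫ p0 := by
      rw [pair_p0, ← Category.assoc, rst_comm, Category.assoc, rst_comp]
    simpa using this
  · have : rst f ≫ pair f g ≫ p1 = pair f g ≫ p1 := by
      rw [pair_p1, ← Category.assoc, rst_idem]
    simpa using this

lemma rst_absorb_pair_right {X B B' : C} (f : X ⟶ B) (g : X ⟶ B') :
    rst g ≫ pair f g = pair f g := by
  apply pair_ext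
  · have : rst g ≫ pair f g ≫ p0 = pair f g ≫ p0 := by
      rw [pair_p0, ← Category.assoc, rst_idem]
    simpa using this
  · have : rst g ≫ pair f g ≫ p1 = pair f g ≫ p1 := by
      rw [pair_p1, ← Category.assoc, rst_comm, Category.assoc, rst_comp]
    simpa using this

lemma rst_pair {X B B' : C} (f : X ⟶ B) (g : X ⟶ B') :
    rst (pair f g) = rst f ≫ rst g := by
  have hf : rst f ≫ rst (pair f g) = rst (pair f g) := by
    calc rst f ≫ rst (pair f g) = rst (rst f ≫ pair f g) := (rst_rst _ _).symm
      _ = rst (pair f g) := by rw [rst_absorb_pair_left]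
  have hg : rst g ≫ rst (pair f g) = rst (pair f g) := by
    calc rst g ≫ rst (pair f g) = rst (rst g ≫ pair f g) := (rst_rst _ _).symm
      _ = rst (pair f g) := by rw [rst_absorb_pair_right]
  have hu : rst (pair f g) ≫ (rst g ≫ rst f) = rst g ≫ rst f := by
    have h1 : rst (pair f g ≫ p0) = rst g ≫ rst f := by rw [pair_p0, rst_rst]
    have h2 := rst_comp_pre (pair f g) (p0 : prod B B' ⟶ B)
    rw [h1] at h2; exact h2
  have he : rst (pair f g) = (rst g ≫ rst f) ≫ rst (pair f g) := by
    conv_lhs => rw [← hg, ← hf]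
    rw [Category.assoc]
  have hcomm : rst (pair f g) ≫ (rst g ≫ rst f) = (rst g ≫ rst f) ≫ rst (pair f g) := by
    have := rst_comm (pair f g) (rst g ≫ f)
    rwa [rst_rst] at this
  have : rst (pair f g) = rst g ≫ rst f := by
    calc rst (pair f g) = (rst g ≫ rst f) ≫ rst (pair f g) := he
      _ = rst (pair f g) ≫ (rst g ≫ rst f) := hcomm.symm
      _ = rst g ≫ rst f := hu
  rw [this, rst_comm]

lemma rst_p0 (B B' : C) : rst (p0 : prod B B' ⟶ B) = 𝟙 (prod B B') := by
  have h : rst (p0 : prod B B' ⟶ B) ≫ rst (p1 : prod B B' ⟶ B') = 𝟙 (prod B B') := by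
    rw [← rst_pair, ← id_eq_pair, rst_one]
  calc rst (p0 : prod B B' ⟶ B)
      = rst (p0 : prod B B' ⟶ B) ≫ (rst (p0 : prod B B' ⟶ B) ≫ rst p1) := by
        rw [h, Category.comp_id]
    _ = (rst (p0 : prod B B' ⟶ B) ≫ rst p0) ≫ rst p1 := by rw [Category.assoc]
    _ = rst (p0 : prod B B' ⟶ B) ≫ rst p1 := by rw [rst_idem]
    _ = 𝟙 _ := h

lemma rst_p1 (B B' : C) : rst (p1 : prod B B' ⟶ B') = 𝟙 (prod B B') := by
  have h : rst (p0 : prod B B' ⟶ B) ≫ rst (p1 : prod B B' ⟶ B') = 𝟙 (prod B B') := by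
    rw [← rst_pair, ← id_eq_pair, rst_one]
  calc rst (p1 : prod B B' ⟶ B') 
      = (rst (p0 : prod B B' ⟶ B) ≫ rst p1) ≫ rst (p1 : prod B B' ⟶ B') := by
        rw [h, Category.id_comp]
    _ = rst (p0 : prod B B' ⟶ B) ≫ (rst p1 ≫ rst p1) := by rw [Category.assoc]
    _ = rst (p0 : prod B B' ⟶ B) ≫ rst p1 := by rw [rst_idem]
    _ = 𝟙 _ := h

@[simp] lemma rst_comp_p0 {X B B' : C} (h : X ⟶ prod B B') :
    rst (h ≫ p0) = rst h := rst_comp_total _ _ (rst_p0 _ _)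

@[simp] lemma rst_comp_p1 {X B B' : C} (h : X ⟶ prod B B') :
    rst (h ≫ p1) = rst h := rst_comp_total _ _ (rst_p1 _ _)

@[simp] lemma rst_comp_zero {X A B : C} (h : X ⟶ A) :
    rst (h ≫ (zero : A ⟶ B)) = rst h := rst_comp_total _ _ zero_total

lemma pair_p0_total {X B B' : C} (f : X ⟶ B) (g : X ⟶ B') (hg : rst g = 𝟙 X) :
    pair f g ≫ p0 = f := by rw [pair_p0, hg, Category.id_comp]

lemma pair_p1_total {X B B' : C} (f : X ⟶ B) (g : X ⟶ B') (hf : rst f = 𝟙 X) :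
    pair f g ≫ p1 = g := by rw [pair_p1, hf, Category.id_comp]

lemma zero_eq_pair (A B B' : C) :
    (zero : A ⟶ prod B B') = pair zero zero := by
  apply pair_ext
  · rw [zero_p0, pair_p0, zero_total, Category.id_comp]
  · rw [zero_p1, pair_p1, zero_total, Category.id_comp]

end Toolkit


section ZeroCalc

variable [JoinRDRC C]

/-- reassoc variants -/
@[simp] lemma pair_p0_assoc {A B B' D : C} (f : A ⟶ B) (g : A ⟶ B') (h : B ⟶ D) :
    pair f g ≫ (p0 ≫ h) = rst g ≫ (f ≫ h) := by
  rw [← Category.assoc, pair_p0, Category.assoc]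

@[simp] lemma pair_p1_assoc {A B B' D : C} (f : A ⟶ B) (g : A ⟶ B') (h : B' ⟶ D) :
    pair f g ≫ (p1 ≫ h) = rst f ≫ (g ≫ h) := by
  rw [← Category.assoc, pair_p1, Category.assoc]

@[simp] lemma rst_comp_assoc {A B D : C} (f : A ⟶ B) (h : B ⟶ D) :
    rst f ≫ (f ≫ h) = f ≫ h := by
  rw [← Category.assoc, rst_comp]

@[simp] lemma rst_idem_assoc {A B D : C} (f : A ⟶ B) (h : A ⟶ D) :
    rst f ≫ (rst f ≫ h) = rst f ≫ h := by
  rw [← Category.assoc, rst_idem]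

@[simp] lemma zero_p0_assoc {A B B' D : C} (h : B ⟶ D) :
    (zero : A ⟶ prod B B') ≫ (p0 ≫ h) = (zero : A ⟶ B) ≫ h := by
  rw [← Category.assoc, zero_p0]

@[simp] lemma zero_p1_assoc {A B B' D : C} (h : B' ⟶ D) :
    (zero : A ⟶ prod B B') ≫ (p1 ≫ h) = (zero : A ⟶ B') ≫ h := by
  rw [← Category.assoc, zero_p1]

attribute [simp] pair_p0 pair_p1 zero_p0 zero_p1 zero_total rst_one rst_p0 rst_p1
  rst_pair rst_comp_p0 rst_comp_p1 rst_comp_zero rst_rst_self rst_comp rst_idem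
  Category.id_comp Category.comp_id rst_comp_rst

@[simp] lemma pair_proj_id (B B' : C) : pair (p0 : prod B B' ⟶ B) p1 = 𝟙 (prod B B') :=
  (id_eq_pair B B').symm

lemma comp_pair_assoc {X A B B' D : C} (x : X ⟶ A) (f : A ⟶ B) (g : A ⟶ B') (h : prod B B' ⟶ D) :
    x ≫ (pair f g ≫ h) = pair (x ≫ f) (x ≫ g) ≫ h := by
  rw [← Category.assoc, comp_pair]

lemma comp_zero_zero {X M V : C} :
    (zero : X ⟶ M) ≫ (zero : M ⟶ V) = (zero : X ⟶ V) := by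
  have h := zero_comp_le (A := X) (f := (zero : M ⟶ V))
  rw [rst_comp_zero, zero_total, Category.id_comp] at h
  exact h.symm

@[simp] lemma comp_zero_zero_simp {X M V : C} :
    (zero : X ⟶ M) ≫ (zero : M ⟶ V) = (zero : X ⟶ V) := comp_zero_zero

@[simp] lemma comp_zero_zero_assoc {X M V D : C} (h : V ⟶ D) :
    (zero : X ⟶ M) ≫ ((zero : M ⟶ V) ≫ h) = (zero : X ⟶ V) ≫ h := by
  rw [← Category.assoc, comp_zero_zero]

lemma add_rst_zero {A B : C} (x : A ⟶ B) : add x (rst x ≫ zero) = x := by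
  have h : rst x ≫ add x zero = add (rst x ≫ x) (rst x ≫ zero) := comp_add _ _ _
  rw [CLARC.add_zero] at h
  simp only [rst_comp] at h
  exact h.symm

lemma Rd_one (A : C) : Rd (𝟙 A) = (p1 : prod A A ⟶ A) := by
  have h := RD9 (f := (𝟙 A))
  rw [rst_one] at h
  rw [h, Category.comp_id, ← id_eq_pair, Category.id_comp]

/-- `π₁ ≫ 0 = 0` when the target is the first factor. -/
lemma p1_zero_first (A B : C) :
    (p1 : prod A B ⟶ B) ≫ (zero : B ⟶ A) = (zero : prod A B ⟶ A) := by
  have hfg : pair (𝟙 A) (zero : A ⟶ B) ≫ (p1 : prod A B ⟶ B) = (zero : A ⟶ B) := by simp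
  have h5 := RD5 (pair (𝟙 A) (zero : A ⟶ B)) (p1 : prod A B ⟶ B)
  rw [hfg, RD1b] at h5
  have hinner : pair (p0 ≫ pair (𝟙 A) (zero : A ⟶ B)) p1 ≫ Rd (p1 : prod A B ⟶ B)
      = pair ((p1 : prod A B ⟶ B) ≫ (zero : B ⟶ A)) p1 := by
    rw [RD3b, ← Category.assoc, pair_p1]
    simp [comp_pair]
  rw [hinner, RD4, Rd_one, RD1b, comp_add, comp_pair_assoc, comp_pair_assoc] at h5
  simp at h5
  rw [CLARC.add_zero] at h5
  exact h5.symm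

@[simp] lemma p1_zero {A B D : C} :
    (p1 : prod A B ⟶ B) ≫ (zero : B ⟶ D) = (zero : prod A B ⟶ D) := by
  have : (zero : B ⟶ D) = (zero : B ⟶ A) ≫ (zero : A ⟶ D) := comp_zero_zero.symm
  rw [this, ← Category.assoc, p1_zero_first, comp_zero_zero]

@[simp] lemma p1_zero_assoc {A B D E : C} (h : D ⟶ E) :
    (p1 : prod A B ⟶ B) ≫ ((zero : B ⟶ D) ≫ h) = (zero : prod A B ⟶ D) ≫ h := by
  rw [← Category.assoc, p1_zero]

end ZeroCalc


section ZLemma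

variable [JoinRDRC C]

@[simp] lemma rst_zero3 {X A B D : C} (f : X ⟶ A) (g : A ⟶ B) :
    rst (f ≫ (g ≫ (zero : B ⟶ D))) = rst (f ≫ g) := by
  rw [← Category.assoc, rst_comp_zero]

@[simp] lemma pair_zero {X U V W : C} (a : X ⟶ U) (b : X ⟶ V) :
    pair a b ≫ (zero : prod U V ⟶ W) = rst a ≫ (b ≫ zero) := by
  rw [← p1_zero (A := U) (B := V) (D := W), ← Category.assoc, pair_p1, Category.assoc]

lemma RdRdRd_one_p1 (A : C) :
    Rd (Rd (Rd (𝟙 A))) ≫ p1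
      = add (pair (p0 ≫ p1) (p1 ≫ p0) ≫ (zero : prod A A ⟶ A)) (p1 ≫ p1) := by
  rw [Rd_one, RD3b, RD5, RD4, RD1b, Rd_one, RD3b]
  simp [comp_add, comp_pair_assoc, comp_pair, add_p0, add_p1]
  rw [← comp_add, rst_comp]

lemma comp_zero_eqA {X A : C} (v : X ⟶ A) :
    v ≫ (zero : A ⟶ A) = rst v ≫ zero := by
  have h := RD6 (𝟙 A)
  rw [RdRdRd_one_p1, Rd_one] at h
  have h2 := congrArg (fun w => pair v (zero : X ⟶ prod A A) ≫ w) h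
  simp only [comp_add, comp_pair_assoc, comp_pair, pair_zero, pair_p0, pair_p1,
    pair_p0_assoc, pair_p1_assoc, zero_p0, zero_p1, zero_p0_assoc, zero_p1_assoc,
    zero_total, rst_one, rst_p0, rst_p1, rst_pair, rst_comp_p0, rst_comp_p1,
    rst_comp_zero, rst_comp, rst_idem, rst_comp_assoc, rst_idem_assoc,
    rst_rst_self, Category.id_comp, Category.comp_id, Category.assoc, rst_zero3,
    comp_zero_zero_simp, comp_zero_zero_assoc, p1_zero, p1_zero_assoc] at h2
  calc v ≫ (zero : A ⟶ A)
      = add (v ≫ zero) (rst (v ≫ (zero : A ⟶ A)) ≫ zero) := (add_rst_zero _).symm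
    _ = add (v ≫ zero) (rst v ≫ zero) := by rw [rst_comp_zero]
    _ = rst v ≫ zero := h2

lemma comp_zero' {X A D : C} (v : X ⟶ A) :
    v ≫ (zero : A ⟶ D) = rst v ≫ zero := by
  conv_lhs => rw [← comp_zero_zero (X := A) (M := A) (V := D)]
  rw [← Category.assoc, comp_zero_eqA, Category.assoc, comp_zero_zero]

end ZLemma


section DopBasics

variable [JoinRDRC C]

lemma idem_pair {X Y : C} (e : X ⟶ X) (he : rst e = e) :
    pair ((p0 : prod X Y ⟶ X) ≫ e) p1 = rst ((p0 : prod X Y ⟶ X) ≫ e) := by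
  apply pair_ext
  · rw [pair_p0, rst_p1, Category.id_comp, ← rst_slide, he]
  · rw [pair_p1]

lemma rst_Rd {A B : C} (h : A ⟶ B) :
    rst (Rd h) = rst ((p0 : prod A B ⟶ A) ≫ h) := by
  rw [RD8, idem_pair _ (rst_rst_self h), rst_comp_rst]

lemma rst_Dop {A B : C} (h : A ⟶ B) :
    rst (Dop h) = rst ((p0 : prod A A ⟶ A) ≫ h) := by
  show rst (pair (pair p0 (zero : prod A A ⟶ B)) p1 ≫ Rd (Rd h) ≫ p1) = _
  rw [← Category.assoc, rst_comp_p1, ← rst_comp_rst, rst_Rd, rst_comp_rst]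
  rw [show pair (pair p0 (zero : prod A A ⟶ B)) p1 ≫ ((p0 : prod (prod A B) A ⟶ prod A B) ≫ Rd h)
      = pair (p0 : prod A A ⟶ A) (zero : prod A A ⟶ B) ≫ Rd h by simp]
  rw [← rst_comp_rst, rst_Rd, rst_comp_rst]
  simp

lemma Rd_rst {A B : C} (h : A ⟶ B) :
    Rd (rst h) = rst ((p0 : prod A A ⟶ A) ≫ rst h) ≫ p1 := by
  rw [RD9, pair_p1]

lemma Dop_one (A : C) : Dop (𝟙 A) = (p1 : prod A A ⟶ A) := by
  show pair (pair p0 (zero : prod A A ⟶ A)) p1 ≫ Rd (Rd (𝟙 A)) ≫ p1 = p1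
  rw [Rd_one, RD3b]
  simp

lemma Dop_rst {A B : C} (h : A ⟶ B) :
    Dop (rst h) = rst ((p0 : prod A A ⟶ A) ≫ rst h) ≫ p1 := by
  set d : prod A A ⟶ prod A A := rst ((p0 : prod A A ⟶ A) ≫ rst h) with hd
  have hdr : rst d = d := by rw [hd, rst_rst_self]
  have habs : ∀ {X : C} (x : X ⟶ prod A A), rst (x ≫ d) = rst (x ≫ ((p0 : prod A A ⟶ A) ≫ rst h)) := by
    intro X x
    rw [hd]
    exact rst_comp_rst x ((p0 : prod A A ⟶ A) ≫ rst h)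
  have hRd2 : Rd (Rd (rst h)) =
      pair p0 (pair (p0 ≫ d) p1 ≫ Rd (p1 : prod A A ⟶ A)) ≫ Rd d := by
    rw [Rd_rst, ← hd, RD5]
  show pair (pair p0 (zero : prod A A ⟶ A)) p1 ≫ Rd (Rd (rst h)) ≫ p1 = d ≫ p1
  rw [hRd2]
  have hRdd : Rd d = rst ((p0 : prod (prod A A) (prod A A) ⟶ prod A A) ≫ d) ≫ p1 := by
    rw [hd, RD9, pair_p1]
  set ι : prod A A ⟶ prod (prod A A) A := pair (pair p0 (zero : prod A A ⟶ A)) p1 with hι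
  have hιp0 : ι ≫ p0 = pair (p0 : prod A A ⟶ A) (zero : prod A A ⟶ A) := by
    rw [hι, pair_p0, rst_p1, Category.id_comp]
  have hQ : ι ≫ (pair (p0 ≫ d) p1 ≫ Rd (p1 : prod A A ⟶ A)) = d ≫ pair (zero : prod A A ⟶ A) p1 := by
    rw [RD3b, pair_p1_assoc]
    rw [show ι ≫ (rst (p0 ≫ d) ≫ (p1 ≫ pair (zero : A ⟶ A) (𝟙 A)))
        = (ι ≫ rst ((p0 : prod (prod A A) A ⟶ prod A A) ≫ d)) ≫ (p1 ≫ pair (zero : A ⟶ A) (𝟙 A)) by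
      rw [Category.assoc]]
    rw [rst_slide]
    have h1 : rst (ι ≫ ((p0 : prod (prod A A) A ⟶ prod A A) ≫ d)) = d := by
      rw [show ι ≫ ((p0 : prod (prod A A) A ⟶ prod A A) ≫ d)
          = pair (p0 : prod A A ⟶ A) (zero : prod A A ⟶ A) ≫ d by
        rw [hι]; simp]
      rw [habs]
      simp [hd]
    have h2 : ι ≫ (p1 ≫ pair (zero : A ⟶ A) (𝟙 A)) = pair (zero : prod A A ⟶ A) p1 := by
      rw [hι]
      simp [comp_pair]
    rw [h1, Category.assoc, h2]
  have hW : ι ≫ pair p0 (pair (p0 ≫ d) p1 ≫ Rd (p1 : prod A A ⟶ A))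
      = pair (pair (p0 : prod A A ⟶ A) (zero : prod A A ⟶ A)) (d ≫ pair (zero : prod A A ⟶ A) p1) := by
    rw [comp_pair, hQ, hιp0]
  rw [show ι ≫ (pair p0 (pair (p0 ≫ d) p1 ≫ Rd (p1 : prod A A ⟶ A)) ≫ Rd d) ≫ p1
      = (ι ≫ pair p0 (pair (p0 ≫ d) p1 ≫ Rd (p1 : prod A A ⟶ A))) ≫ (Rd d ≫ p1) by
    simp only [Category.assoc]]
  rw [hW, hRdd]
  set W : prod A A ⟶ prod (prod A A) (prod A A) :=
    pair (pair (p0 : prod A A ⟶ A) (zero : prod A A ⟶ A)) (d ≫ pair (zero : prod A A ⟶ A) p1) with hWdef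
  have hrstW2 : rst (d ≫ pair (zero : prod A A ⟶ A) p1) = d := by
    rw [← hdr, rst_rst, rst_pair]
    simp [hdr]
  have h3 : rst (W ≫ ((p0 : prod (prod A A) (prod A A) ⟶ prod A A) ≫ d)) = d := by
    rw [show W ≫ ((p0 : prod (prod A A) (prod A A) ⟶ prod A A) ≫ d)
        = rst (d ≫ pair (zero : prod A A ⟶ A) p1) ≫ (pair (p0 : prod A A ⟶ A) (zero : prod A A ⟶ A) ≫ d) by
      rw [hWdef]; simp]
    rw [rst_rst, hrstW2, habs]
    simp [hd]
  have h4 : W ≫ ((p1 : prod (prod A A) (prod A A) ⟶ prod A A) ≫ (p1 : prod A A ⟶ A)) = d ≫ p1 := by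
    rw [hWdef, pair_p1_assoc]
    rw [show rst (pair (p0 : prod A A ⟶ A) (zero : prod A A ⟶ A)) = 𝟙 (prod A A) by simp]
    rw [Category.id_comp, Category.assoc]
    rw [show pair (zero : prod A A ⟶ A) (p1 : prod A A ⟶ A) ≫ (p1 : prod A A ⟶ A) = p1 by simp]
  calc W ≫ (rst ((p0 : prod (prod A A) (prod A A) ⟶ prod A A) ≫ d) ≫ p1) ≫ p1
      = (W ≫ rst ((p0 : prod (prod A A) (prod A A) ⟶ prod A A) ≫ d)) ≫ (p1 ≫ p1) := by
        simp only [Category.assoc]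
    _ = (rst (W ≫ ((p0 : prod (prod A A) (prod A A) ⟶ prod A A) ≫ d)) ≫ W) ≫ (p1 ≫ p1) := by
        rw [rst_slide]
    _ = d ≫ (W ≫ ((p1 : prod (prod A A) (prod A A) ⟶ prod A A) ≫ (p1 : prod A A ⟶ A))) := by
        rw [h3]; simp only [Category.assoc]
    _ = d ≫ (d ≫ p1) := by rw [h4]
    _ = d ≫ p1 := by rw [← Category.assoc, ← hdr, rst_idem, hdr]

end DopBasics


section PullLemmas

variable [JoinRDRC C]

lemma rst_comm' {X Y : C} (e : X ⟶ X) (he : rst e = e) (w : X ⟶ Y) :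
    e ≫ rst w = rst w ≫ e := by
  conv_lhs => rw [← he]
  rw [rst_comm, he]

lemma idem_sq {X : C} (e : X ⟶ X) (he : rst e = e) : e ≫ e = e := by
  nth_rewrite 1 [← he]
  exact rst_comp e

lemma idem_rst_comp {X W : C} (e : X ⟶ X) (he : rst e = e) (w : X ⟶ W) :
    rst (e ≫ w) = e ≫ rst w := by
  rw [← he, rst_rst]

lemma idem_H1 {X Y Z : C} (e : X ⟶ X) (he : rst e = e) (w : X ⟶ Y) (u : X ⟶ Z) :
    rst w ≫ (e ≫ u) = rst (e ≫ w) ≫ (e ≫ u) := by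
  have h1 : rst w ≫ (e ≫ u) = e ≫ (rst w ≫ u) := by
    rw [← Category.assoc, ← rst_comm' e he w, Category.assoc]
  have h2 : rst (e ≫ w) ≫ (e ≫ u) = e ≫ (rst w ≫ u) := by
    rw [idem_rst_comp e he w, Category.assoc, ← Category.assoc (rst w) e u,
      ← rst_comm' e he w, Category.assoc, ← Category.assoc e e,
      idem_sq e he, ← Category.assoc, rst_comm' e he w, Category.assoc,
      ← Category.assoc, ← rst_comm' e he w, Category.assoc]
  rw [h1, h2]

lemma idem_H2 {X Y Z : C} (e : X ⟶ X) (he : rst e = e) (w : X ⟶ Y) (u : X ⟶ Z) :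
    rst (e ≫ w) ≫ u = rst (e ≫ w) ≫ (e ≫ u) := by
  have h1 : rst (e ≫ w) ≫ u = e ≫ (rst w ≫ u) := by
    rw [idem_rst_comp e he w, Category.assoc]
  have h2 : rst (e ≫ w) ≫ (e ≫ u) = e ≫ (rst w ≫ u) := by
    rw [idem_rst_comp e he w, Category.assoc, ← Category.assoc (rst w) e u,
      ← rst_comm' e he w, Category.assoc, ← Category.assoc e e,
      idem_sq e he, ← Category.assoc, rst_comm' e he w, Category.assoc,
      ← Category.assoc, ← rst_comm' e he w, Category.assoc]
  rw [h1, h2]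

lemma pair_pull_left {X Y Z : C} (e : X ⟶ X) (he : rst e = e) (u : X ⟶ Y) (v : X ⟶ Z) :
    pair (e ≫ u) v = e ≫ pair u v := by
  rw [comp_pair]
  apply pair_ext
  · rw [pair_p0, pair_p0]
    exact idem_H1 e he v u
  · rw [pair_p1, pair_p1]
    exact idem_H2 e he u v

lemma pair_pull_right {X Y Z : C} (e : X ⟶ X) (he : rst e = e) (u : X ⟶ Y) (v : X ⟶ Z) :
    pair u (e ≫ v) = e ≫ pair u v := by
  rw [comp_pair]
  apply pair_ext
  · rw [pair_p0, pair_p0]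
    exact idem_H2 e he v u
  · rw [pair_p1, pair_p1]
    exact idem_H1 e he u v

end PullLemmas


section ChainRule

variable [JoinRDRC C]

theorem Dop_comp {A B D : C} (f : A ⟶ B) (g : B ⟶ D) :
    Dop (f ≫ g) = Tang f ≫ Dop g := by
  -- basic idempotents
  set z : prod A A ⟶ prod A A := rst ((p0 : prod A A ⟶ A) ≫ (f ≫ g)) with hzd
  set φ : prod A A ⟶ prod A A := rst ((p0 : prod A A ⟶ A) ≫ f) with hφd
  have hzr : rst z = z := by rw [hzd, rst_rst_self]
  have hφr : rst φ = φ := by rw [hφd, rst_rst_self]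
  have hzφ : z ≫ φ = z := by
    rw [hzd, hφd, ← Category.assoc p0 f g]
    exact rst_comp_post ((p0 : prod A A ⟶ A) ≫ f) g
  have hφz : φ ≫ z = z := by
    rw [hφd, hzd, rst_comm, ← hzd, ← hφd, hzφ]
  have hDopf_rst : rst (Dop f) = φ := by rw [rst_Dop, hφd]
  have hDopg_rst : rst (Dop g) = rst ((p0 : prod B B ⟶ B) ≫ g) := rst_Dop g
  -- notation
  set r : prod A D ⟶ B := pair (p0 ≫ f) p1 ≫ Rd g with hr
  set q : prod A D ⟶ prod A B := pair p0 r with hq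
  set Xf : prod A A ⟶ prod A B := pair (pair p0 (zero : prod A A ⟶ B)) p1 ≫ Rd (Rd f) with hXf
  have hXfp1 : Xf ≫ p1 = Dop f := by
    rw [hXf, Category.assoc]; rfl
  have hXf_rst : rst Xf = φ := by
    rw [← rst_comp_p1 Xf, hXfp1, hDopf_rst]
  -- step s3/s4
  have hs3 : pair (p0 : prod A A ⟶ A) (zero : prod A A ⟶ D) ≫ r = z ≫ (zero : prod A A ⟶ B) := by
    rw [hr, ← Category.assoc,
      show pair (p0 : prod A A ⟶ A) (zero : prod A A ⟶ D) ≫ pair (p0 ≫ f) p1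
        = pair ((p0 : prod A A ⟶ A) ≫ f) (zero : prod A A ⟶ D) by simp [comp_pair],
      RD2b, hzd, Category.assoc]
  have hs4 : pair (p0 : prod A A ⟶ A) (zero : prod A A ⟶ D) ≫ q = z ≫ pair p0 (zero : prod A A ⟶ B) := by
    rw [hq, comp_pair, hs3,
      show pair (p0 : prod A A ⟶ A) (zero : prod A A ⟶ D) ≫ p0 = (p0 : prod A A ⟶ A) by simp]
    exact pair_pull_right z hzr _ _
  -- W
  set W : prod A A ⟶ prod (prod A D) (prod A B) := pair (pair p0 (zero : prod A A ⟶ D)) (z ≫ Xf) with hWd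
  have hrstW : rst W = z := by
    rw [hWd, rst_pair, idem_rst_comp z hzr, hXf_rst, hzφ]
    simp
  have hW : pair (pair p0 (zero : prod A A ⟶ D)) p1 ≫ pair p0 (pair (p0 ≫ q) p1 ≫ Rd (Rd f)) = W := by
    rw [comp_pair, hWd]
    congr 1
    · simp
    · rw [show pair (pair p0 (zero : prod A A ⟶ D)) p1 ≫ (pair (p0 ≫ q) p1 ≫ Rd (Rd f))
          = (pair (pair p0 (zero : prod A A ⟶ D)) p1 ≫ pair (p0 ≫ q) p1) ≫ Rd (Rd f) by
        rw [Category.assoc]]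
      rw [comp_pair,
        show pair (pair p0 (zero : prod A A ⟶ D)) p1 ≫ (p0 ≫ q)
          = pair (p0 : prod A A ⟶ A) (zero : prod A A ⟶ D) ≫ q by
          rw [← Category.assoc, pair_p0, rst_p1, Category.id_comp],
        hs4,
        show pair (pair p0 (zero : prod A A ⟶ D)) p1 ≫ p1 = (p1 : prod A A ⟶ A) by simp,
        pair_pull_left z hzr, Category.assoc, ← hXf]
  -- Dop (f ≫ g) as W ≫ (Rd q ≫ p1)
  have hDop3 : Dop (f ≫ g) = W ≫ (Rd q ≫ p1) := by
    show pair (pair p0 (zero : prod A A ⟶ D)) p1 ≫ Rd (Rd (f ≫ g)) ≫ p1 = _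
    rw [show Rd (f ≫ g) = q ≫ Rd f by rw [RD5, hq, hr], RD5, ← Category.assoc, ← Category.assoc, hW,
      Category.assoc]
  -- split Rd q
  have hsplit : Rd q ≫ p1 = add ((pair p0 (p1 ≫ p0) ≫ Rd (p0 : prod A D ⟶ A)) ≫ p1)
      ((pair p0 (p1 ≫ p1) ≫ Rd r) ≫ p1) := by
    rw [hq, RD4, add_p1]
  -- garbage 1
  have hT1p : (pair p0 (p1 ≫ p0) ≫ Rd (p0 : prod A D ⟶ A)) ≫ p1
      = (zero : prod (prod A D) (prod A B) ⟶ D) := by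
    rw [RD3a]
    simp only [Category.assoc]
    rw [show pair (𝟙 A) (zero : A ⟶ D) ≫ p1 = (zero : A ⟶ D) by simp]
    rw [p1_zero, pair_zero]
    rw [Category.assoc, comp_zero' (p0 : prod A B ⟶ A)]
    simp
  have hG1 : W ≫ ((pair p0 (p1 ≫ p0) ≫ Rd (p0 : prod A D ⟶ A)) ≫ p1) = z ≫ (zero : prod A A ⟶ D) := by
    rw [hT1p, comp_zero' W, hrstW]
  -- the T2 part
  set q' : prod A D ⟶ prod B D := pair (p0 ≫ f) p1 with hq'
  set N : prod A A ⟶ prod (prod B D) B := pair (pair ((p0 : prod A A ⟶ A) ≫ f) (zero : prod A A ⟶ D)) (Dop f) with hN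
  have hrstN : rst (N ≫ Rd (Rd g)) = z := by
    rw [← rst_comp_rst, rst_Rd, rst_comp_rst, ← Category.assoc, hN]
    rw [show pair (pair ((p0 : prod A A ⟶ A) ≫ f) (zero : prod A A ⟶ D)) (Dop f) ≫ (p0 : prod (prod B D) B ⟶ prod B D)
        = rst (Dop f) ≫ pair ((p0 : prod A A ⟶ A) ≫ f) (zero : prod A A ⟶ D) by rw [pair_p0]]
    rw [hDopf_rst, Category.assoc, RD2b]
    rw [← Category.assoc φ, rst_comp_zero, rst_comp_rst, hφd, rst_rst]
    rw [hzd, ← Category.assoc p0 f g]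
    exact rst_comp_pre ((p0 : prod A A ⟶ A) ≫ f) g
  -- V₀-composite
  set V0 : prod A A ⟶ prod (prod A D) B := pair (pair p0 (zero : prod A A ⟶ D)) (Dop f) with hV0
  have hWp : W ≫ pair p0 (p1 ≫ p1) = z ≫ V0 := by
    rw [comp_pair, hWd]
    rw [show pair (pair p0 (zero : prod A A ⟶ D)) (z ≫ Xf) ≫ p0
        = rst (z ≫ Xf) ≫ pair p0 (zero : prod A A ⟶ D) by rw [pair_p0],
      idem_rst_comp z hzr, hXf_rst, hzφ]
    rw [show pair (pair p0 (zero : prod A A ⟶ D)) (z ≫ Xf) ≫ ((p1 : prod (prod A D) (prod A B) ⟶ prod A B) ≫ p1)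
        = z ≫ Dop f by
        rw [pair_p1_assoc]
        rw [show rst (pair (p0 : prod A A ⟶ A) (zero : prod A A ⟶ D)) = 𝟙 (prod A A) by simp]
        rw [Category.id_comp, Category.assoc, hXfp1]]
    rw [pair_pull_left z hzr, pair_pull_right z hzr, ← Category.assoc, idem_sq z hzr, hV0]
  -- Y₀
  have hY0 : V0 ≫ pair p0 (pair (p0 ≫ q') p1 ≫ Rd (Rd g))
      = φ ≫ pair (pair p0 (zero : prod A A ⟶ D)) (N ≫ Rd (Rd g)) := by
    rw [comp_pair]
    rw [show V0 ≫ p0 = φ ≫ pair p0 (zero : prod A A ⟶ D) by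
      rw [hV0, pair_p0, hDopf_rst]]
    rw [show V0 ≫ (pair (p0 ≫ q') p1 ≫ Rd (Rd g)) = φ ≫ (N ≫ Rd (Rd g)) by
      rw [← Category.assoc, comp_pair]
      rw [show V0 ≫ (p0 ≫ q') = φ ≫ pair ((p0 : prod A A ⟶ A) ≫ f) (zero : prod A A ⟶ D) by
        rw [← Category.assoc,
          show V0 ≫ p0 = φ ≫ pair p0 (zero : prod A A ⟶ D) by rw [hV0, pair_p0, hDopf_rst],
          Category.assoc,
          show pair (p0 : prod A A ⟶ A) (zero : prod A A ⟶ D) ≫ q' = pair ((p0 : prod A A ⟶ A) ≫ f) (zero : prod A A ⟶ D) by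
            rw [hq', comp_pair]; simp]]
      rw [show V0 ≫ p1 = Dop f by
        rw [hV0, pair_p1]
        rw [show rst (pair (p0 : prod A A ⟶ A) (zero : prod A A ⟶ D)) = 𝟙 (prod A A) by simp]
        rw [Category.id_comp]]
      rw [pair_pull_left φ hφr, ← hN, ← Category.assoc]]
    rw [pair_pull_left φ hφr, pair_pull_right φ hφr, ← Category.assoc, idem_sq φ hφr]
  -- σ lemma
  have hRdp0f : Rd ((p0 : prod A D ⟶ A) ≫ f) ≫ p1
      = rst ((p0 : prod (prod A D) B ⟶ prod A D) ≫ (p0 ≫ f)) ≫ (zero : prod (prod A D) B ⟶ D) := by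
    rw [RD5, RD3a]
    simp only [Category.assoc]
    rw [show pair (𝟙 A) (zero : A ⟶ D) ≫ p1 = (zero : A ⟶ D) by simp, p1_zero, pair_zero]
    rw [show rst (p0 : prod (prod A D) B ⟶ prod A D) ≫ (pair (p0 ≫ p0) p1 ≫ Rd f) ≫ (zero : A ⟶ D)
        = (pair ((p0 : prod (prod A D) B ⟶ prod A D) ≫ p0) p1 ≫ Rd f) ≫ (zero : A ⟶ D) by
      rw [rst_p0, Category.id_comp, Category.assoc]]
    rw [comp_zero' (pair ((p0 : prod (prod A D) B ⟶ prod A D) ≫ p0) p1 ≫ Rd f)]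
    rw [← rst_comp_rst, rst_Rd, rst_comp_rst]
    rw [show pair ((p0 : prod (prod A D) B ⟶ prod A D) ≫ p0) p1 ≫ ((p0 : prod A B ⟶ A) ≫ f)
        = (p0 : prod (prod A D) B ⟶ prod A D) ≫ (p0 ≫ f) by
      rw [pair_p0_assoc, rst_p1, Category.id_comp, Category.assoc]]
  have hRdp1D : Rd (p1 : prod A D ⟶ D) ≫ p1 = (p1 : prod (prod A D) D ⟶ D) := by
    rw [RD3b]
    simp
  -- Rd q' ≫ p1
  have hRdq'p1 : Rd q' ≫ p1
      = add (pair p0 (p1 ≫ p0) ≫ (rst ((p0 : prod (prod A D) B ⟶ prod A D) ≫ (p0 ≫ f)) ≫ (zero : prod (prod A D) B ⟶ D)))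
          ((p1 : prod (prod A D) (prod B D) ⟶ prod B D) ≫ p1) := by
    rw [hq', RD4, add_p1, Category.assoc, Category.assoc, hRdp0f, hRdp1D]
    congr 1
    rw [pair_p1]
    simp
  -- assemble T2
  have hT2 : W ≫ ((pair p0 (p1 ≫ p1) ≫ Rd r) ≫ p1)
      = add (z ≫ (zero : prod A A ⟶ D)) (z ≫ (N ≫ (Rd (Rd g) ≫ p1))) := by
    rw [show r = q' ≫ Rd g by rw [hr, hq'], RD5]
    rw [show (pair p0 (p1 ≫ p1) ≫ pair p0 (pair (p0 ≫ q') p1 ≫ Rd (Rd g)) ≫ Rd q') ≫ p1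
        = pair p0 (p1 ≫ p1) ≫ (pair p0 (pair (p0 ≫ q') p1 ≫ Rd (Rd g)) ≫ (Rd q' ≫ p1)) by
      simp only [Category.assoc]]
    rw [show W ≫ (pair p0 (p1 ≫ p1) ≫ (pair p0 (pair (p0 ≫ q') p1 ≫ Rd (Rd g)) ≫ (Rd q' ≫ p1)))
        = (W ≫ pair p0 (p1 ≫ p1)) ≫ (pair p0 (pair (p0 ≫ q') p1 ≫ Rd (Rd g)) ≫ (Rd q' ≫ p1)) by
      rw [Category.assoc]]
    rw [hWp, hRdq'p1, Category.assoc]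
    rw [show V0 ≫ (pair p0 (pair (p0 ≫ q') p1 ≫ Rd (Rd g)) ≫ (add (pair p0 (p1 ≫ p0) ≫ (rst ((p0 : prod (prod A D) B ⟶ prod A D) ≫ (p0 ≫ f)) ≫ (zero : prod (prod A D) B ⟶ D))) ((p1 : prod (prod A D) (prod B D) ⟶ prod B D) ≫ p1)))
        = (V0 ≫ pair p0 (pair (p0 ≫ q') p1 ≫ Rd (Rd g))) ≫ (add (pair p0 (p1 ≫ p0) ≫ (rst ((p0 : prod (prod A D) B ⟶ prod A D) ≫ (p0 ≫ f)) ≫ (zero : prod (prod A D) B ⟶ D))) ((p1 : prod (prod A D) (prod B D) ⟶ prod B D) ≫ p1)) by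
      rw [Category.assoc]]
    rw [hY0]
    set Y0 : prod A A ⟶ prod (prod A D) (prod B D) := pair (pair p0 (zero : prod A A ⟶ D)) (N ≫ Rd (Rd g)) with hY0d
    rw [show z ≫ (φ ≫ Y0) ≫ (add (pair p0 (p1 ≫ p0) ≫ (rst ((p0 : prod (prod A D) B ⟶ prod A D) ≫ (p0 ≫ f)) ≫ (zero : prod (prod A D) B ⟶ D))) ((p1 : prod (prod A D) (prod B D) ⟶ prod B D) ≫ p1))
        = (z ≫ Y0) ≫ (add (pair p0 (p1 ≫ p0) ≫ (rst ((p0 : prod (prod A D) B ⟶ prod A D) ≫ (p0 ≫ f)) ≫ (zero : prod (prod A D) B ⟶ D))) ((p1 : prod (prod A D) (prod B D) ⟶ prod B D) ≫ p1)) by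
      rw [← Category.assoc, ← Category.assoc, hzφ]]
    rw [comp_add]
    congr 1
    · -- garbage 2
      rw [show (z ≫ Y0) ≫ (pair p0 (p1 ≫ p0) ≫ (rst ((p0 : prod (prod A D) B ⟶ prod A D) ≫ (p0 ≫ f)) ≫ (zero : prod (prod A D) B ⟶ D)))
          = (((z ≫ Y0) ≫ pair p0 (p1 ≫ p0)) ≫ rst ((p0 : prod (prod A D) B ⟶ prod A D) ≫ (p0 ≫ f))) ≫ (zero : prod (prod A D) B ⟶ D) by
        simp only [Category.assoc]]
      rw [comp_zero', rst_comp_rst]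
      rw [show ((z ≫ Y0) ≫ pair p0 (p1 ≫ p0)) ≫ ((p0 : prod (prod A D) B ⟶ prod A D) ≫ (p0 ≫ f))
          = z ≫ (Y0 ≫ (p0 ≫ ((p0 : prod A D ⟶ A) ≫ f))) by
        simp only [Category.assoc]
        congr 2
        rw [pair_p0_assoc]
        rw [show rst ((p1 : prod (prod A D) (prod B D) ⟶ prod B D) ≫ p0) = 𝟙 _ by simp]
        rw [Category.id_comp]]
      rw [show Y0 ≫ ((p0 : prod (prod A D) (prod B D) ⟶ prod A D) ≫ ((p0 : prod A D ⟶ A) ≫ f))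
          = rst (N ≫ Rd (Rd g)) ≫ ((p0 : prod A A ⟶ A) ≫ f) by
        rw [hY0d, pair_p0_assoc]
        congr 1
        rw [pair_p0_assoc]
        simp]
      rw [hrstN]
      rw [show rst (z ≫ z ≫ (p0 : prod A A ⟶ A) ≫ f) = z by
        rw [← Category.assoc z z, idem_sq z hzr, idem_rst_comp z hzr, ← hφd, hzφ]]
    · -- main term
      rw [show (z ≫ Y0) ≫ ((p1 : prod (prod A D) (prod B D) ⟶ prod B D) ≫ p1)
          = z ≫ (Y0 ≫ ((p1 : prod (prod A D) (prod B D) ⟶ prod B D) ≫ p1)) by rw [Category.assoc]]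
      congr 1
      rw [hY0d, pair_p1_assoc]
      rw [show rst (pair (p0 : prod A A ⟶ A) (zero : prod A A ⟶ D)) = 𝟙 (prod A A) by simp]
      rw [Category.id_comp, Category.assoc]
  -- target form
  have hTD : Tang f ≫ Dop g = φ ≫ (N ≫ (Rd (Rd g) ≫ p1)) := by
    show pair (p0 ≫ f) (Dop f) ≫ (pair (pair p0 (zero : prod B B ⟶ D)) p1 ≫ Rd (Rd g) ≫ p1) = _
    rw [show pair (p0 ≫ f) (Dop f) ≫ (pair (pair p0 (zero : prod B B ⟶ D)) p1 ≫ Rd (Rd g) ≫ p1)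
        = (pair (p0 ≫ f) (Dop f) ≫ pair (pair p0 (zero : prod B B ⟶ D)) p1) ≫ (Rd (Rd g) ≫ p1) by
      simp only [Category.assoc]]
    rw [show pair ((p0 : prod A A ⟶ A) ≫ f) (Dop f) ≫ pair (pair p0 (zero : prod B B ⟶ D)) p1 = φ ≫ N by
      rw [comp_pair, comp_pair]
      rw [show pair ((p0 : prod A A ⟶ A) ≫ f) (Dop f) ≫ p0 = (p0 : prod A A ⟶ A) ≫ f by
        rw [pair_p0, hDopf_rst, hφd]
        exact rst_comp _]
      rw [show pair ((p0 : prod A A ⟶ A) ≫ f) (Dop f) ≫ (zero : prod B B ⟶ D) = φ ≫ (zero : prod A A ⟶ D) by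
        rw [comp_zero', rst_pair, hDopf_rst, ← hφd, idem_sq φ hφr]]
      rw [show pair ((p0 : prod A A ⟶ A) ≫ f) (Dop f) ≫ p1 = Dop f by
        rw [pair_p1, ← hφd, ← hDopf_rst]
        exact rst_comp _]
      rw [pair_pull_right φ hφr, pair_pull_left φ hφr, hN]]
    rw [Category.assoc]
  have hrstTD : rst (Tang f ≫ Dop g) = z := by
    rw [← rst_comp_rst, rst_Dop, rst_comp_rst]
    rw [show Tang f ≫ ((p0 : prod B B ⟶ B) ≫ g) = ((p0 : prod A A ⟶ A) ≫ f) ≫ g by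
      show pair (p0 ≫ f) (Dop f) ≫ ((p0 : prod B B ⟶ B) ≫ g) = _
      rw [pair_p0_assoc, hDopf_rst, hφd, ← Category.assoc, rst_comp]]
    rw [hzd, Category.assoc]
  have hMAIN : z ≫ (N ≫ (Rd (Rd g) ≫ p1)) = Tang f ≫ Dop g := by
    conv_rhs => rw [← rst_comp (Tang f ≫ Dop g), hrstTD, hTD]
    rw [← Category.assoc z φ, hzφ]
  -- absorption identity
  have habs : add (Tang f ≫ Dop g) (z ≫ (zero : prod A A ⟶ D)) = Tang f ≫ Dop g := by
    set Pa : prod A A ⟶ prod B D := z ≫ pair ((p0 : prod A A ⟶ A) ≫ f) (zero : prod A A ⟶ D) with hPa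
    set Pc : prod A A ⟶ B := z ≫ Dop f with hPc
    have hzN : z ≫ N = pair Pa Pc := by rw [hN, comp_pair, hPa, hPc]
    have hMAIN2 : Tang f ≫ Dop g = pair Pa Pc ≫ (Rd (Rd g) ≫ p1) := by
      rw [← hMAIN, ← Category.assoc z N, hzN]
    have hrstPc : rst Pc = z := by rw [hPc, idem_rst_comp z hzr, hDopf_rst, hzφ]
    have hPaRdg : rst (Pa ≫ Rd g) = z := by
      rw [hPa, Category.assoc, RD2b, idem_rst_comp z hzr, rst_comp_zero, rst_rst_self]
      rw [hzd, Category.assoc p0 f g]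
      exact idem_sq _ (rst_rst_self _)
    have h2a := RD2a Pa Pc (rst Pc ≫ (zero : prod A A ⟶ B)) (Rd g)
    rw [add_rst_zero] at h2a
    have hzslot : pair Pa (rst Pc ≫ (zero : prod A A ⟶ B)) ≫ Rd (Rd g)
        = z ≫ (zero : prod A A ⟶ prod B D) := by
      rw [pair_pull_right (rst Pc) (rst_rst_self Pc) Pa (zero : prod A A ⟶ B), Category.assoc, RD2b,
        hrstPc, hPaRdg, ← Category.assoc, idem_sq z hzr]
    rw [hzslot] at h2a
    have hkey := congrArg (fun w => w ≫ (p1 : prod B D ⟶ D)) h2a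
    simp only [add_p1, Category.assoc, zero_p1] at hkey
    rw [hMAIN2]
    exact hkey.symm
  -- final assembly
  rw [hDop3, hsplit, comp_add, hG1, hT2]
  rw [← CLARC.add_assoc, show add (z ≫ (zero : prod A A ⟶ D)) (z ≫ (zero : prod A A ⟶ D)) = z ≫ (zero : prod A A ⟶ D) by
    rw [← comp_add, CLARC.add_zero]]
  rw [hMAIN, CLARC.add_comm, habs]

end ChainRule


section TangLemmas

variable [JoinRDRC C]

lemma Tang_one (A : C) : Tang (𝟙 A) = 𝟙 (prod A A) := by
  show pair (p0 ≫ 𝟙 A) (Dop (𝟙 A)) = 𝟙 (prod A A)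
  rw [Dop_one, Category.comp_id, pair_proj_id]

lemma Tang_comp {A B D : C} (f : A ⟶ B) (g : B ⟶ D) :
    Tang (f ≫ g) = Tang f ≫ Tang g := by
  show pair (p0 ≫ (f ≫ g)) (Dop (f ≫ g)) = Tang f ≫ pair (p0 ≫ g) (Dop g)
  rw [Dop_comp, comp_pair]
  have hTp0 : Tang f ≫ (p0 : prod B B ⟶ B) = (p0 : prod A A ⟶ A) ≫ f := by
    show pair (p0 ≫ f) (Dop f) ≫ p0 = _
    rw [pair_p0, rst_Dop]
    exact rst_comp _
  congr 1
  rw [← Category.assoc, ← hTp0, Category.assoc]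

lemma Tang_rst {A B : C} (h : A ⟶ B) :
    Tang (rst h) = pair ((p0 : prod A A ⟶ A) ≫ rst h) p1 := by
  show pair (p0 ≫ rst h) (Dop (rst h)) = _
  rw [Dop_rst]
  apply pair_ext
  · rw [pair_p0, pair_p0, rst_p1, Category.id_comp]
    rw [show rst (rst ((p0 : prod A A ⟶ A) ≫ rst h) ≫ p1) = rst ((p0 : prod A A ⟶ A) ≫ rst h) by
      rw [← rst_rst_self ((p0 : prod A A ⟶ A) ≫ rst h), rst_rst, rst_p1, Category.comp_id, rst_rst_self]]
    exact rst_comp _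
  · rw [pair_p1, pair_p1]
    exact rst_idem_assoc _ _

lemma Tang_pow {A : C} (u : A ⟶ A) (n : ℕ) :
    Tang (pow u n) = pow (Tang u) n := by
  induction n with
  | zero => exact Tang_one A
  | succ k ih =>
    show Tang (u ≫ pow u k) = Tang u ≫ pow (Tang u) k
    rw [Tang_comp, ih]

lemma Dop_precomp_rst {A B : C} (h : A ⟶ A) (hh : rst h = h) (g : A ⟶ B) :
    Dop (h ≫ g) = rst ((p0 : prod A A ⟶ A) ≫ h) ≫ Dop g := by
  rw [Dop_comp, ← hh, Tang_rst, idem_pair _ (rst_rst_self h), rst_comp_rst]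

end TangLemmas

section JoinBasics

variable [JoinRDRC C]

lemma bot_comp {A B Y : C} (y : B ⟶ Y) :
    join (∅ : Set (A ⟶ B)) ≫ y = join (∅ : Set (A ⟶ Y)) := by
  rw [join_comp (∅ : Set (A ⟶ B)) y (by simp)]
  congr 1
  simp

lemma comp_bot {X A B : C} (x : X ⟶ A) :
    x ≫ join (∅ : Set (A ⟶ B)) = join (∅ : Set (X ⟶ B)) := by
  rw [comp_join x (∅ : Set (A ⟶ B)) (by simp)]
  congr 1
  simp

lemma rst_bot_self (A : C) : rst (join (∅ : Set (A ⟶ A))) = join (∅ : Set (A ⟶ A)) := by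
  have h := join_min (∅ : Set (A ⟶ A)) (𝟙 A) (by simp) (by simp)
  rw [Category.comp_id] at h
  exact h

lemma rst_bot {A B : C} : rst (join (∅ : Set (A ⟶ B))) = join (∅ : Set (A ⟶ A)) := by
  have h1 : join (∅ : Set (A ⟶ B)) = join (∅ : Set (A ⟶ A)) ≫ join (∅ : Set (A ⟶ B)) := by
    rw [comp_bot]
  have h2 : rst (join (∅ : Set (A ⟶ B))) = join (∅ : Set (A ⟶ A)) ≫ rst (join (∅ : Set (A ⟶ B))) := by
    conv_lhs => rw [h1]
    rw [← rst_bot_self A, rst_rst, rst_bot_self]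
  rw [h2, bot_comp]

end JoinBasics


section WhileLemmas

variable [JoinRDRC C]

lemma rst_comp_comp {X Y Z W : C} (u : X ⟶ Y) (x : Y ⟶ Z) (y : Y ⟶ W) :
    rst (u ≫ x) ≫ (u ≫ y) = u ≫ (rst x ≫ y) := by
  rw [← Category.assoc, ← rst_slide, Category.assoc]

lemma while_disj_aux1 [JoinRDRC C] {X : C} (u T F : X ⟶ X) (hTi : rst T = T) (hFi : rst F = F)
    (hd : T ≫ F = join (∅ : Set (X ⟶ X))) :
    ∀ (k : ℕ) (w : X ⟶ X),
      rst (pow (T ≫ u) k ≫ F) ≫ (pow (T ≫ u) k ≫ (T ≫ w)) = join (∅ : Set (X ⟶ X)) := by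
  intro k
  induction k with
  | zero =>
    intro w
    show rst (𝟙 X ≫ F) ≫ (𝟙 X ≫ (T ≫ w)) = _
    rw [Category.id_comp, Category.id_comp, hFi, ← Category.assoc]
    rw [show F ≫ T = T ≫ F by rw [← hTi, ← hFi, rst_comm]]
    rw [hd, bot_comp]
  | succ k ih =>
    intro w
    show rst (((T ≫ u) ≫ pow (T ≫ u) k) ≫ F) ≫ (((T ≫ u) ≫ pow (T ≫ u) k) ≫ (T ≫ w)) = _
    simp only [Category.assoc]
    rw [rst_comp_comp, rst_comp_comp, ih w, comp_bot, comp_bot]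

lemma while_disj_aux2 [JoinRDRC C] {X : C} (u T F : X ⟶ X) (hTi : rst T = T) (hFi : rst F = F)
    (hd : T ≫ F = join (∅ : Set (X ⟶ X))) :
    ∀ (k : ℕ) (w : X ⟶ X),
      rst (pow (T ≫ u) k ≫ (T ≫ w)) ≫ (pow (T ≫ u) k ≫ F) = join (∅ : Set (X ⟶ X)) := by
  intro k
  induction k with
  | zero =>
    intro w
    show rst (𝟙 X ≫ (T ≫ w)) ≫ (𝟙 X ≫ F) = _
    rw [Category.id_comp, Category.id_comp]
    have h1 : rst (T ≫ w) ≫ F = rst (T ≫ w) ≫ (T ≫ F) := by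
      conv_lhs => rw [← rst_comp_post T w, hTi, Category.assoc]
    rw [h1, hd, comp_bot]
  | succ k ih =>
    intro w
    show rst (((T ≫ u) ≫ pow (T ≫ u) k) ≫ (T ≫ w)) ≫ (((T ≫ u) ≫ pow (T ≫ u) k) ≫ F) = _
    simp only [Category.assoc]
    rw [rst_comp_comp, rst_comp_comp, ih w, comp_bot, comp_bot]

lemma powc_add [JoinRDRC C] {X : C} (u : X ⟶ X) (k n : ℕ) :
    pow u (k + n) = pow u k ≫ pow u n := by
  induction k with
  | zero => rw [Nat.zero_add]; exact (Category.id_comp _).symm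
  | succ k ih =>
    rw [Nat.succ_add]
    show u ≫ pow u (k + n) = (u ≫ pow u k) ≫ pow u n
    rw [ih, Category.assoc]

lemma while_compat [JoinRDRC C] {X : C} (u T F : X ⟶ X) (hTi : rst T = T) (hFi : rst F = F)
    (hd : T ≫ F = join (∅ : Set (X ⟶ X))) (m n : ℕ) :
    rst (pow (T ≫ u) m ≫ F) ≫ (pow (T ≫ u) n ≫ F)
      = rst (pow (T ≫ u) n ≫ F) ≫ (pow (T ≫ u) m ≫ F) := by
  have key : ∀ (a b : ℕ), a < b →
      rst (pow (T ≫ u) a ≫ F) ≫ (pow (T ≫ u) b ≫ F) = join (∅ : Set (X ⟶ X)) := by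
    intro a b hab
    obtain ⟨d, rfl⟩ : ∃ d, b = a + (d + 1) := ⟨b - a - 1, by omega⟩
    rw [powc_add]
    rw [show pow (T ≫ u) (d + 1) = (T ≫ u) ≫ pow (T ≫ u) d from rfl]
    rw [show (pow (T ≫ u) a ≫ ((T ≫ u) ≫ pow (T ≫ u) d)) ≫ F
        = pow (T ≫ u) a ≫ (T ≫ (u ≫ (pow (T ≫ u) d ≫ F))) by simp only [Category.assoc]]
    exact while_disj_aux1 u T F hTi hFi hd a _
  have key2 : ∀ (a b : ℕ), a < b →
      rst (pow (T ≫ u) b ≫ F) ≫ (pow (T ≫ u) a ≫ F) = join (∅ : Set (X ⟶ X)) := by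
    intro a b hab
    obtain ⟨d, rfl⟩ : ∃ d, b = a + (d + 1) := ⟨b - a - 1, by omega⟩
    rw [powc_add]
    rw [show pow (T ≫ u) (d + 1) = (T ≫ u) ≫ pow (T ≫ u) d from rfl]
    rw [show (pow (T ≫ u) a ≫ ((T ≫ u) ≫ pow (T ≫ u) d)) ≫ F
        = pow (T ≫ u) a ≫ (T ≫ (u ≫ (pow (T ≫ u) d ≫ F))) by simp only [Category.assoc]]
    exact while_disj_aux2 u T F hTi hFi hd a _
  rcases lt_trichotomy m n with h | h | h
  · rw [key m n h, key2 m n h]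
  · rw [h]
  · rw [key n m h, key2 n m h]

end WhileLemmas

/-- In a reverse differential restriction category with countable
joins of disjoint maps, the forward derivative of the while-loop interpretation
satisfies
`D[⋁ₙ (b_T ≫ f)ⁿ ≫ b_F] = (⋁ₙ ((b_T × 1) ≫ T(f))ⁿ ≫ (b_F × 1)) ≫ π₁`,
where `b_T, b_F` are disjoint restriction idempotents on `A` and
`T(f) = ⟨π₀ f, D[f]⟩`. -/
theorem Dop_while [JoinRDRC C] {A : C} (f : A ⟶ A) (bT bF : A ⟶ A)
    (hT : rst bT = bT) (hF : rst bF = bF)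
    (hdisj : bT ≫ bF = join (∅ : Set (A ⟶ A))) :
    Dop (join (Set.range fun n => pow (bT ≫ f) n ≫ bF))
      = join (Set.range fun n =>
          pow (pair (p0 ≫ bT) p1 ≫ Tang f) n ≫ pair (p0 ≫ bF) p1) ≫ p1 := by
  set s : ℕ → (A ⟶ A) := fun n => pow (bT ≫ f) n ≫ bF with hs
  set T2 : prod A A ⟶ prod A A := pair (p0 ≫ bT) p1 with hT2
  set F2 : prod A A ⟶ prod A A := pair (p0 ≫ bF) p1 with hF2
  set t : ℕ → (prod A A ⟶ prod A A) := fun n => pow (T2 ≫ Tang f) n ≫ F2 with ht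
  -- idempotency facts
  have hT2e : T2 = rst ((p0 : prod A A ⟶ A) ≫ bT) := by
    rw [hT2, ← hT, idem_pair _ (rst_rst_self bT), rst_comp_rst]
  have hF2e : F2 = rst ((p0 : prod A A ⟶ A) ≫ bF) := by
    rw [hF2, ← hF, idem_pair _ (rst_rst_self bF), rst_comp_rst]
  have hT2i : rst T2 = T2 := by rw [hT2e, rst_rst_self]
  have hF2i : rst F2 = F2 := by rw [hF2e, rst_rst_self]
  have hdisj2 : T2 ≫ F2 = join (∅ : Set (prod A A ⟶ prod A A)) := by
    rw [hT2e, hF2e]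
    have h1 : rst ((p0 : prod A A ⟶ A) ≫ bT) ≫ ((p0 : prod A A ⟶ A) ≫ bF)
        = join (∅ : Set (prod A A ⟶ A)) := by
      rw [rst_comp_comp, hT, hdisj, comp_bot]
    calc rst ((p0 : prod A A ⟶ A) ≫ bT) ≫ rst ((p0 : prod A A ⟶ A) ≫ bF)
        = rst (rst ((p0 : prod A A ⟶ A) ≫ bT) ≫ ((p0 : prod A A ⟶ A) ≫ bF)) := (rst_rst _ _).symm
      _ = rst (join (∅ : Set (prod A A ⟶ A))) := by rw [h1]
      _ = join (∅ : Set (prod A A ⟶ prod A A)) := rst_bot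
  -- compatibility of both families
  have hcomp1 : ∀ x ∈ Set.range s, ∀ y ∈ Set.range s, rst x ≫ y = rst y ≫ x := by
    rintro x ⟨m, rfl⟩ y ⟨n, rfl⟩
    exact while_compat f bT bF hT hF hdisj m n
  have hcomp2 : ∀ x ∈ Set.range t, ∀ y ∈ Set.range t, rst x ≫ y = rst y ≫ x := by
    rintro x ⟨m, rfl⟩ y ⟨n, rfl⟩
    exact while_compat (Tang f) T2 F2 hT2i hF2i hdisj2 m n
  -- termwise derivative
  have hterm : ∀ n, Dop (s n) = t n ≫ p1 := by
    intro n
    induction n with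
    | zero =>
      show Dop (𝟙 A ≫ bF) = (𝟙 (prod A A) ≫ F2) ≫ p1
      rw [Category.id_comp, Category.id_comp, ← hF, Dop_rst, hF, hF2e]
    | succ k ih =>
      show Dop (((bT ≫ f) ≫ pow (bT ≫ f) k) ≫ bF)
          = (((T2 ≫ Tang f) ≫ pow (T2 ≫ Tang f) k) ≫ F2) ≫ p1
      rw [show ((bT ≫ f) ≫ pow (bT ≫ f) k) ≫ bF = (bT ≫ f) ≫ (pow (bT ≫ f) k ≫ bF) by
        simp only [Category.assoc]]
      rw [Dop_comp, Tang_comp]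
      rw [show Tang bT = T2 by rw [← hT, Tang_rst, hT, hT2]]
      rw [show Dop (pow (bT ≫ f) k ≫ bF) = t k ≫ p1 from ih]
      rw [ht, hT2]
      simp only [Category.assoc]
  -- abbreviations
  set J : A ⟶ A := join (Set.range s) with hJ
  set K : prod A A ⟶ A := join (Set.range fun n => Dop (s n)) with hK
  -- RHS reduces to K
  have hRHS : join (Set.range t) ≫ (p1 : prod A A ⟶ A) = K := by
    rw [join_comp _ _ hcomp2, hK]
    congr 1
    rw [show ((· ≫ (p1 : prod A A ⟶ A)) '' Set.range t) = Set.range (fun n => t n ≫ p1) by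
      rw [← Set.range_comp]; rfl]
    exact congrArg Set.range (funext fun n => (hterm n).symm)
  -- join facts for s
  have hsJ : ∀ n, rst (s n) ≫ J = s n := fun n => join_le _ hcomp1 _ ⟨n, rfl⟩
  set e : ℕ → (prod A A ⟶ prod A A) := fun n => rst ((p0 : prod A A ⟶ A) ≫ s n) with he
  have heDop : ∀ n, rst (Dop (s n)) = e n := fun n => rst_Dop (s n)
  have hDsJ : ∀ n, Dop (s n) = e n ≫ Dop J := by
    intro n
    conv_lhs => rw [← hsJ n]
    rw [Dop_precomp_rst (rst (s n)) (rst_rst_self _) J, he]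
    rw [rst_comp_rst]
  have heir : ∀ n, rst (e n) = e n := by
    intro n
    simp only [he]
    exact rst_rst_self _
  -- compatibility of the K family
  have hgen : ∀ a b : ℕ, rst (e a ≫ Dop J) ≫ (e b ≫ Dop J) = (e a ≫ e b) ≫ Dop J := by
    intro a b
    calc rst (e a ≫ Dop J) ≫ (e b ≫ Dop J)
        = (e a ≫ rst (Dop J)) ≫ (e b ≫ Dop J) := by
          rw [idem_rst_comp (e a) (heir a) (Dop J)]
      _ = e a ≫ ((rst (Dop J) ≫ e b) ≫ Dop J) := by simp only [Category.assoc]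
      _ = e a ≫ ((e b ≫ rst (Dop J)) ≫ Dop J) := by
          rw [(rst_comm' (e b) (heir b) (Dop J)).symm]
      _ = e a ≫ (e b ≫ (rst (Dop J) ≫ Dop J)) := by simp only [Category.assoc]
      _ = e a ≫ (e b ≫ Dop J) := by rw [rst_comp]
      _ = (e a ≫ e b) ≫ Dop J := by rw [Category.assoc]
  have hcompK : ∀ x ∈ (Set.range fun n => Dop (s n)), ∀ y ∈ (Set.range fun n => Dop (s n)),
      rst x ≫ y = rst y ≫ x := by
    rintro x ⟨m, rfl⟩ y ⟨n, rfl⟩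
    show rst (Dop (s m)) ≫ Dop (s n) = rst (Dop (s n)) ≫ Dop (s m)
    rw [hDsJ m, hDsJ n, hgen m n, hgen n m]
    congr 1
    simp only [he]
    exact rst_comm _ _
  -- K ≤ Dop J
  have hKJ : rst K ≫ Dop J = K := by
    rw [hK]
    apply join_min _ _ hcompK
    rintro x ⟨n, rfl⟩
    show rst (Dop (s n)) ≫ Dop J = Dop (s n)
    rw [heDop n]
    exact (hDsJ n).symm
  -- each Dop (s n) is below K
  have hnK : ∀ n, rst (Dop (s n)) ≫ K = Dop (s n) := fun n => join_le _ hcompK _ ⟨n, rfl⟩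
  have henK : ∀ n, e n ≫ rst K = e n := by
    intro n
    have h1 : rst (e n ≫ K) = e n := by
      rw [← heDop n, hnK n]
    have h2 : rst (e n ≫ K) = e n ≫ rst K := by
      rw [he]
      exact idem_rst_comp _ (rst_rst_self _) K
    rw [← h2, h1]
  -- rst K = rst (Dop J)
  have he1 : rst K ≫ rst (Dop J) = rst K := by
    conv_rhs => rw [← hKJ, rst_rst]
  have hLcompat : ∀ x ∈ ((fun w => (p0 : prod A A ⟶ A) ≫ w) '' Set.range s),
      ∀ y ∈ ((fun w => (p0 : prod A A ⟶ A) ≫ w) '' Set.range s), rst x ≫ y = rst y ≫ x := by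
    rintro x ⟨x', ⟨m, rfl⟩, rfl⟩ y ⟨y', ⟨n, rfl⟩, rfl⟩
    rw [rst_comp_comp, rst_comp_comp, hcomp1 (s m) ⟨m, rfl⟩ (s n) ⟨n, rfl⟩]
  have hLJ : (p0 : prod A A ⟶ A) ≫ J = join ((fun w => (p0 : prod A A ⟶ A) ≫ w) '' Set.range s) := by
    rw [hJ]
    exact comp_join _ _ hcomp1
  have hstar : rst ((p0 : prod A A ⟶ A) ≫ J) ≫ (rst K ≫ ((p0 : prod A A ⟶ A) ≫ J))
      = (p0 : prod A A ⟶ A) ≫ J := by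
    conv_lhs => rw [hLJ]
    conv_rhs => rw [hLJ]
    apply join_min _ _ hLcompat
    rintro x ⟨x', ⟨n, rfl⟩, rfl⟩
    show rst ((p0 : prod A A ⟶ A) ≫ s n)
          ≫ (rst K ≫ join ((fun w => (p0 : prod A A ⟶ A) ≫ w) '' Set.range s))
        = (p0 : prod A A ⟶ A) ≫ s n
    rw [← hLJ]
    have h3 : rst ((p0 : prod A A ⟶ A) ≫ s n) ≫ rst K = rst ((p0 : prod A A ⟶ A) ≫ s n) :=
      henK n
    rw [← Category.assoc, h3, rst_comp_comp, hsJ n]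
  have he2 : rst (Dop J) ≫ rst K = rst (Dop J) := by
    rw [rst_Dop]
    have hA : rst ((p0 : prod A A ⟶ A) ≫ J)
        = rst ((p0 : prod A A ⟶ A) ≫ J) ≫ (rst K ≫ rst ((p0 : prod A A ⟶ A) ≫ J)) := by
      conv_lhs => rw [← hstar]
      rw [rst_rst, rst_rst]
    have h5 : rst ((p0 : prod A A ⟶ A) ≫ J) = rst ((p0 : prod A A ⟶ A) ≫ J) ≫ rst K := by
      conv_lhs => rw [hA]
      rw [rst_comm K ((p0 : prod A A ⟶ A) ≫ J), ← Category.assoc, rst_idem]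
    exact h5.symm
  have hrstK : rst K = rst (Dop J) := by
    rw [← he1, rst_comm, he2]
  -- conclude
  have hDJ : Dop J = K := by
    conv_lhs => rw [← rst_comp (Dop J), ← hrstK, hKJ]
  rw [hRHS, hDJ]
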